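/- arXiv:2005.01465 — 2 statements merged into one kernel-verified Lean document; each statement's English description precedes it below -/
import Mathlib

section
/- Let $(b_k)_{k=1}^\infty$ be a sequence of nonnegative real numbers, $\sigma\in\mathbb{N}$, $C>0$, and suppose $b_k\le C\sum_{k_1+\cdots+k_{2\sigma+1}=k,\ k_i\ge 1} b_{k_1}\cdots b_{k_{2\sigma+1}}$ for all $k\ge 2$. Then $b_k\le b_1 C_0^{k-1}$ for all $k\ge 1$, where $C_0=\frac{\pi^2}{6}\left(C(2\sigma+1)^2\right)^{1/(2\sigma)} b_1$. -/
open scoped BigOperators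

noncomputable section
open Finset
set_option maxHeartbeats 1600000

lemma basel_partial (s : Finset ℕ) : ∑ x ∈ s, (1:ℝ)/(x:ℝ)^2 ≤ Real.pi^2/6 :=
  sum_le_hasSum s (fun n _ => by positivity) hasSum_zeta_two

lemma column_bound (m k : ℕ) (i : Fin m) :
    ∑ t ∈ (Finset.Nat.antidiagonalTuple m k).filter (fun t => ∀ j, 1 ≤ t j),
      ∏ j ∈ univ.erase i, (1:ℝ)/(t j:ℝ)^2 ≤ (Real.pi^2/6)^(m-1) := by
  classical
  set S := (Finset.Nat.antidiagonalTuple m k).filter (fun t => ∀ j, 1 ≤ t j) with hS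
  have hmem : ∀ t ∈ S, (∑ j, t j = k) ∧ ∀ j, 1 ≤ t j := by
    intro t ht
    rw [hS, mem_filter, Finset.Nat.mem_antidiagonalTuple] at ht
    exact ht
  set F : Fin m → Finset ℕ := fun j => if j = i then {1} else Finset.Icc 1 k with hF
  set φ : (Fin m → ℕ) → (Fin m → ℕ) := fun t => Function.update t i 1 with hφ
  have hφeq : ∀ t, ∀ j ∈ univ.erase i, (1:ℝ)/(φ t j:ℝ)^2 = (1:ℝ)/(t j:ℝ)^2 := by
    intro t j hj
    rw [mem_erase] at hj
    rw [hφ]; simp [Function.update_of_ne hj.1]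
  have hinj : Set.InjOn φ S := by
    intro t ht t' ht' hE
    have h1 := hmem t ht; have h2 := hmem t' ht'
    have hoff : ∀ j, j ≠ i → t j = t' j := by
      intro j hj
      have := congrFun hE j
      simpa only [hφ, Function.update_of_ne hj] using this
    have hsum : ∑ j ∈ univ.erase i, t j = ∑ j ∈ univ.erase i, t' j :=
      Finset.sum_congr rfl (fun j hj => hoff j (mem_erase.1 hj).1)
    have h3 : t i + ∑ j ∈ univ.erase i, t j = k := by
      rw [Finset.add_sum_erase _ _ (mem_univ i)]; exact h1.1
    have h4 : t' i + ∑ j ∈ univ.erase i, t' j = k := by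
      rw [Finset.add_sum_erase _ _ (mem_univ i)]; exact h2.1
    have hi : t i = t' i := by omega
    funext j
    by_cases hj : j = i
    · rw [hj]; exact hi
    · exact hoff j hj
  have himg : ∀ t ∈ S, φ t ∈ Fintype.piFinset F := by
    intro t ht
    have h1 := hmem t ht
    rw [Fintype.mem_piFinset]
    intro j
    by_cases hj : j = i
    · subst hj; rw [hφ, hF]; simp
    · simp only [hφ, Function.update_of_ne hj, hF, if_neg hj, Finset.mem_Icc]
      refine ⟨h1.2 j, ?_⟩
      calc t j ≤ ∑ j', t j' := Finset.single_le_sum (fun _ _ => Nat.zero_le _) (mem_univ j)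
        _ = k := h1.1
  set f : Fin m → ℕ → ℝ := fun j x => if j = i then 1 else 1/(x:ℝ)^2 with hf
  calc ∑ t ∈ S, ∏ j ∈ univ.erase i, (1:ℝ)/(t j:ℝ)^2
      = ∑ t ∈ S, ∏ j ∈ univ.erase i, (1:ℝ)/(φ t j:ℝ)^2 := by
        refine Finset.sum_congr rfl fun t _ => (Finset.prod_congr rfl (hφeq t)).symm
    _ = ∑ u ∈ S.image φ, ∏ j ∈ univ.erase i, (1:ℝ)/(u j:ℝ)^2 := by
        rw [Finset.sum_image (fun a ha b hb h => hinj ha hb h)]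
    _ ≤ ∑ u ∈ Fintype.piFinset F, ∏ j ∈ univ.erase i, (1:ℝ)/(u j:ℝ)^2 := by
        refine Finset.sum_le_sum_of_subset_of_nonneg ?_ (fun u _ _ => by positivity)
        intro u hu
        obtain ⟨t, ht, rfl⟩ := Finset.mem_image.1 hu
        exact himg t ht
    _ = ∑ u ∈ Fintype.piFinset F, ∏ j, f j (u j) := by
        refine Finset.sum_congr rfl fun u _ => ?_
        rw [← Finset.prod_erase_mul _ _ (mem_univ i)]
        have h1 : f i (u i) = 1 := by simp [hf]
        rw [h1, mul_one]
        refine Finset.prod_congr rfl fun j hj => ?_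
        simp [hf, (mem_erase.1 hj).1]
    _ = ∏ j, ∑ x ∈ F j, f j x := (Finset.prod_univ_sum F f).symm
    _ ≤ (Real.pi^2/6)^(m-1) := by
        rw [← Finset.prod_erase_mul _ _ (mem_univ i)]
        have h2 : ∑ x ∈ F i, f i x = 1 := by simp [hf, hF]
        rw [h2, mul_one]
        have hcard : (univ.erase i).card = m - 1 := by
          rw [Finset.card_erase_of_mem (mem_univ i), Finset.card_univ, Fintype.card_fin]
        calc ∏ j ∈ univ.erase i, ∑ x ∈ F j, f j x
            ≤ ∏ _j ∈ univ.erase i, (Real.pi^2/6) := by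
              refine Finset.prod_le_prod (fun j hj => ?_) (fun j hj => ?_)
              · simp only [hf, hF, if_neg (mem_erase.1 hj).1]
                positivity
              · simp only [hf, hF, if_neg (mem_erase.1 hj).1]
                exact basel_partial _
          _ = (Real.pi^2/6)^(m-1) := by rw [Finset.prod_const, hcard]

lemma sum_bound (m k : ℕ) (hm : 1 ≤ m) (hk : 1 ≤ k) :
    ∑ t ∈ (Finset.Nat.antidiagonalTuple m k).filter (fun t => ∀ j, 1 ≤ t j),
      ∏ j, (1:ℝ)/(t j:ℝ)^2 ≤ (m:ℝ)^2 * (Real.pi^2/6)^(m-1) / (k:ℝ)^2 := by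
  classical
  set S := (Finset.Nat.antidiagonalTuple m k).filter (fun t => ∀ j, 1 ≤ t j) with hS
  have hk0 : (0:ℝ) < (k:ℝ)^2 := by positivity
  have hm0 : (0:ℝ) < (m:ℝ) := by exact_mod_cast hm
  have key : ∀ t ∈ S, ∏ j, (1:ℝ)/(t j:ℝ)^2 ≤
      (m:ℝ)/(k:ℝ)^2 * ∑ i, ∏ j ∈ Finset.univ.erase i, (1:ℝ)/(t j:ℝ)^2 := by
    intro t ht
    rw [hS, mem_filter, Finset.Nat.mem_antidiagonalTuple] at ht
    obtain ⟨hsum, hpos⟩ := ht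
    have h1 : ∀ i : Fin m, ∏ j ∈ Finset.univ.erase i, (1:ℝ)/(t j:ℝ)^2
        = (t i:ℝ)^2 * ∏ j, (1:ℝ)/(t j:ℝ)^2 := by
      intro i
      have hti : (t i:ℝ) ≠ 0 := by
        have := hpos i; positivity
      have hP : (∏ x ∈ Finset.univ.erase i, (t x:ℝ)^2) ≠ 0 :=
        Finset.prod_ne_zero_iff.2 fun x _ => pow_ne_zero 2 (by
          have := hpos x; positivity)
      rw [← Finset.prod_erase_mul _ _ (Finset.mem_univ i)]
      field_simp
    have hCS : (k:ℝ)^2 ≤ (m:ℝ) * ∑ i, (t i:ℝ)^2 := by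
      have h := sq_sum_le_card_mul_sum_sq (s := Finset.univ) (f := fun i => (t i : ℝ))
      have hsr : ∑ i, (t i : ℝ) = (k:ℝ) := by exact_mod_cast congrArg (Nat.cast (R := ℝ)) hsum
      simpa [hsr, Finset.card_univ] using h
    have hprod0 : (0:ℝ) ≤ ∏ j, (1:ℝ)/(t j:ℝ)^2 := by positivity
    have heq : ∑ i, ∏ j ∈ Finset.univ.erase i, (1:ℝ)/(t j:ℝ)^2
        = (∑ i, (t i:ℝ)^2) * ∏ j, (1:ℝ)/(t j:ℝ)^2 := by
      simp_rw [h1]; rw [← Finset.sum_mul]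
    rw [heq]
    have h2 : (1:ℝ) ≤ (m:ℝ)/(k:ℝ)^2 * (∑ i, (t i:ℝ)^2) := by
      rw [div_mul_eq_mul_div, le_div_iff₀ hk0, one_mul]
      exact hCS
    calc ∏ j, (1:ℝ)/(t j:ℝ)^2 = 1 * ∏ j, (1:ℝ)/(t j:ℝ)^2 := (one_mul _).symm
      _ ≤ ((m:ℝ)/(k:ℝ)^2 * ∑ i, (t i:ℝ)^2) * ∏ j, (1:ℝ)/(t j:ℝ)^2 :=
          mul_le_mul_of_nonneg_right h2 hprod0
      _ = (m:ℝ)/(k:ℝ)^2 * ((∑ i, (t i:ℝ)^2) * ∏ j, (1:ℝ)/(t j:ℝ)^2) := by ring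
  calc ∑ t ∈ S, ∏ j, (1:ℝ)/(t j:ℝ)^2
      ≤ ∑ t ∈ S, (m:ℝ)/(k:ℝ)^2 * ∑ i, ∏ j ∈ Finset.univ.erase i, (1:ℝ)/(t j:ℝ)^2 :=
        Finset.sum_le_sum key
    _ = (m:ℝ)/(k:ℝ)^2 * ∑ i : Fin m, ∑ t ∈ S, ∏ j ∈ Finset.univ.erase i, (1:ℝ)/(t j:ℝ)^2 := by
        rw [← Finset.mul_sum, Finset.sum_comm]
    _ ≤ (m:ℝ)/(k:ℝ)^2 * ∑ _i : Fin m, (Real.pi^2/6)^(m-1) := by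
        refine mul_le_mul_of_nonneg_left
          (Finset.sum_le_sum fun i _ => column_bound m k i) (by positivity)
    _ = (m:ℝ)^2 * (Real.pi^2/6)^(m-1) / (k:ℝ)^2 := by
        rw [Finset.sum_const, Finset.card_univ, Fintype.card_fin, nsmul_eq_mul]
        ring


/-- Power-series bound for recursively dominated sequences: if
`b_k ≤ C ∑_{k₁+⋯+k_{2σ+1}=k, kᵢ≥1} b_{k₁}⋯b_{k_{2σ+1}}` for all `k ≥ 2`, then
`b_k ≤ b₁ C₀^{k-1}` with `C₀ = (π²/6)(C(2σ+1)²)^{1/(2σ)} b₁`. -/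
theorem recursive_sequence_bound (σ : ℕ) (hσ : 1 ≤ σ) (C : ℝ) (hC : 0 < C)
    (b : ℕ → ℝ) (hb : ∀ k, 0 ≤ b k)
    (hrec : ∀ k : ℕ, 2 ≤ k →
      b k ≤ C * ∑ t ∈ (Finset.Nat.antidiagonalTuple (2 * σ + 1) k).filter
          (fun t => ∀ i, 1 ≤ t i),
        ∏ i : Fin (2 * σ + 1), b (t i)) :
    ∀ k : ℕ, 1 ≤ k →
      b k ≤ b 1 *
        (Real.pi ^ 2 / 6 * (C * (2 * σ + 1) ^ 2) ^ ((1 : ℝ) / (2 * σ)) * b 1) ^ (k - 1) := by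
  have hb1 : 0 ≤ b 1 := hb 1
  set m : ℕ := 2 * σ + 1 with hm
  have hYpos : (0:ℝ) < C * (2 * (σ:ℝ) + 1) ^ 2 := by positivity
  set D : ℝ := Real.pi ^ 2 / 6 * (C * (2 * (σ:ℝ) + 1) ^ 2) ^ ((1 : ℝ) / (2 * (σ:ℝ))) * b 1
    with hD
  have hD0 : 0 ≤ D := by
    have := Real.rpow_nonneg hYpos.le ((1 : ℝ) / (2 * (σ:ℝ)))
    have hpi : (0:ℝ) ≤ Real.pi ^ 2 / 6 := by positivity
    rw [hD]
    exact mul_nonneg (mul_nonneg hpi this) hb1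
  have hσR : (2 * (σ:ℝ)) ≠ 0 := by
    have : (0:ℝ) < (σ:ℝ) := by exact_mod_cast hσ
    positivity
  have hX : ((C * (2 * (σ:ℝ) + 1) ^ 2) ^ ((1 : ℝ) / (2 * (σ:ℝ)))) ^ (2 * σ : ℕ)
      = C * (2 * (σ:ℝ) + 1) ^ 2 := by
    rw [← Real.rpow_natCast (_ ^ _) (2 * σ), ← Real.rpow_mul hYpos.le]
    push_cast
    rw [one_div, inv_mul_cancel₀ hσR, Real.rpow_one]
  have hDpow : b 1 * D ^ (m - 1) = C * (b 1) ^ m * (m:ℝ)^2 * (Real.pi^2/6) ^ (m - 1) := by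
    have hm1 : m - 1 = 2 * σ := by omega
    rw [hm1, hD, mul_pow, mul_pow, hX, hm]
    push_cast
    ring
  have main : ∀ k, 1 ≤ k → b k ≤ b 1 * D ^ (k - 1) / (k:ℝ)^2 := by
    intro k
    induction k using Nat.strong_induction_on with
    | _ k ih =>
      intro hk1
      rcases eq_or_lt_of_le hk1 with h1 | h2
      · rw [← h1]; simp
      · have hk2 : 2 ≤ k := h2
        have hrhs0 : 0 ≤ b 1 * D ^ (k - 1) / (k:ℝ)^2 := by positivity
        by_cases hkm : k < m
        · have hempty : (Finset.Nat.antidiagonalTuple m k).filter (fun t => ∀ i, 1 ≤ t i)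
              = ∅ := by
            rw [Finset.filter_eq_empty_iff]
            intro t ht hall
            rw [Finset.Nat.mem_antidiagonalTuple] at ht
            have hmk : m ≤ k := by
              calc m = ∑ _i : Fin m, 1 := by
                    rw [Finset.sum_const, Finset.card_univ, Fintype.card_fin, smul_eq_mul,
                      mul_one]
                _ ≤ ∑ i, t i := Finset.sum_le_sum fun i _ => hall i
                _ = k := ht
            omega
          have h := hrec k hk2
          rw [hempty, Finset.sum_empty, mul_zero] at h
          linarith
        · push_neg at hkm
          set S := (Finset.Nat.antidiagonalTuple m k).filter (fun t => ∀ i, 1 ≤ t i) with hSdef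
          have hterm : ∀ t ∈ S, ∏ i, b (t i)
              ≤ (b 1)^m * D^(k-m) * ∏ i, (1:ℝ)/(t i:ℝ)^2 := by
            intro t ht
            rw [hSdef, Finset.mem_filter, Finset.Nat.mem_antidiagonalTuple] at ht
            obtain ⟨hsum, hpos⟩ := ht
            have hlt : ∀ i, t i < k := by
              intro i
              have h3 : t i + ∑ j ∈ Finset.univ.erase i, t j = k := by
                rw [Finset.add_sum_erase _ _ (Finset.mem_univ i)]; exact hsum
              have h4 : m - 1 ≤ ∑ j ∈ Finset.univ.erase i, t j := by
                calc m - 1 = ∑ _j ∈ Finset.univ.erase i, 1 := by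
                      rw [Finset.sum_const, Finset.card_erase_of_mem (Finset.mem_univ i),
                        Finset.card_univ, Fintype.card_fin, smul_eq_mul, mul_one]
                  _ ≤ ∑ j ∈ Finset.univ.erase i, t j :=
                      Finset.sum_le_sum fun j _ => hpos j
              omega
            have hsub : ∑ i, (t i - 1) + m = k := by
              have he : ∑ i, (t i - 1 + 1) = ∑ i, t i :=
                Finset.sum_congr rfl fun i _ => Nat.sub_add_cancel (hpos i)
              rw [Finset.sum_add_distrib, Finset.sum_const, Finset.card_univ,
                Fintype.card_fin, smul_eq_mul, mul_one] at he
              omega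
            calc ∏ i, b (t i) ≤ ∏ i, (b 1 * D ^ (t i - 1) * (1/(t i:ℝ)^2)) := by
                  refine Finset.prod_le_prod (fun i _ => hb _) (fun i _ => ?_)
                  have h5 := ih (t i) (hlt i) (hpos i)
                  calc b (t i) ≤ b 1 * D ^ (t i - 1) / ((t i:ℝ))^2 := h5
                    _ = b 1 * D ^ (t i - 1) * (1/(t i:ℝ)^2) := by ring
              _ = (b 1)^m * D^(k-m) * ∏ i, (1:ℝ)/(t i:ℝ)^2 := by
                  rw [Finset.prod_mul_distrib, Finset.prod_mul_distrib,
                    Finset.prod_const, Finset.card_univ, Fintype.card_fin,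
                    Finset.prod_pow_eq_pow_sum]
                  have hEq : ∑ i, (t i - 1) = k - m := by omega
                  rw [hEq]
          have hsb := sum_bound m k (by omega) (by omega)
          have hcoef : (0:ℝ) ≤ (b 1)^m * D^(k-m) := by positivity
          have h := hrec k hk2
          calc b k ≤ C * ∑ t ∈ S, ∏ i, b (t i) := h
            _ ≤ C * ∑ t ∈ S, ((b 1)^m * D^(k-m) * ∏ i, (1:ℝ)/(t i:ℝ)^2) := by
                exact mul_le_mul_of_nonneg_left (Finset.sum_le_sum hterm) hC.le
            _ = C * ((b 1)^m * D^(k-m) * ∑ t ∈ S, ∏ i, (1:ℝ)/(t i:ℝ)^2) := by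
                rw [← Finset.mul_sum]
            _ ≤ C * ((b 1)^m * D^(k-m) * ((m:ℝ)^2 * (Real.pi^2/6)^(m-1) / (k:ℝ)^2)) := by
                refine mul_le_mul_of_nonneg_left (mul_le_mul_of_nonneg_left hsb hcoef) hC.le
            _ = (b 1 * D ^ (m-1)) * D^(k-m) / (k:ℝ)^2 := by rw [hDpow]; ring
            _ = b 1 * D ^ (k - 1) / (k:ℝ)^2 := by
                rw [mul_assoc, ← pow_add]
                congr 3
                omega
  intro k hk
  calc b k ≤ b 1 * D ^ (k - 1) / (k:ℝ)^2 := main k hk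
    _ ≤ b 1 * D ^ (k - 1) := by
        rw [div_le_iff₀ (by positivity : (0:ℝ) < (k:ℝ)^2)]
        have h1 : (1:ℝ) ≤ (k:ℝ)^2 := by
          have : (1:ℝ) ≤ (k:ℝ) := by exact_mod_cast hk
          nlinarith
        nlinarith [mul_nonneg hb1 (pow_nonneg hD0 (k-1))]
end
end

section
/- Let $j\in\mathbb{R}^d\setminus\{0\}$ and $s\le 0$. There exists $C=C(j,s)$, independent of $p\in[1,\infty]$ and of $\varepsilon\in(0,1]$, such that for all $f\in\mathcal{S}(\mathbb{R}^d)$, $\|f(\cdot)e^{ij\cdot x/\varepsilon}\|_{\mathcal{F}L^p_s}\le C\,\varepsilon^{|s|}\,\|f\|_{\mathcal{F}L^p_{|s|}}$. -/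
/-! Modulating by `e^{2πi⟨v,x⟩}` translates the Fourier transform by `v`, and the `L^p` norm is
translation invariant, so everything reduces to the pointwise weight comparison
`⟨ξ⟩^{-t} ≤ (√2/‖v‖)^t ⟨ξ - v⟩^t`, which follows from `‖v‖ ≤ ‖ξ‖ + ‖ξ - v‖`
(Peetre's inequality). For `v = j/(2πε)` the constant `√2/‖v‖` is `2√2π ε/‖j‖`. -/

open MeasureTheory FourierTransform
open scoped RealInnerProductSpace ENNReal

noncomputable section

/-- The Fourier–Lebesgue norm `‖f‖_{𝓕L^p_s} = ‖⟨·⟩^s 𝓕f‖_{L^p}`. -/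
def FLnorm (d : ℕ) (s : ℝ) (p : ℝ≥0∞) (f : EuclideanSpace ℝ (Fin d) → ℂ) : ℝ≥0∞ :=
  eLpNorm (fun ξ => ‖𝓕 f ξ‖ * (1 + ‖ξ‖ ^ 2) ^ (s / 2)) p volume

theorem eLpNorm_comp_sub_right {G ε : Type*} [AddGroup G] [MeasurableSpace G] [MeasurableAdd G]
    [TopologicalSpace ε] [ContinuousENorm ε] (μ : Measure G) [μ.IsAddRightInvariant]
    (g : G → ε) (v : G) (p : ℝ≥0∞) :
    eLpNorm (fun x => g (x - v)) p μ = eLpNorm g p μ := by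
  change eLpNorm (g ∘ MeasurableEquiv.subRight v) p μ = _
  rw [← (MeasurableEquiv.subRight v).measurableEmbedding.eLpNorm_map_measure]
  exact congrArg (eLpNorm g p ·) (measurePreserving_sub_right μ v).map_eq

theorem Real.fourier_mul_exp_inner {V : Type*} [NormedAddCommGroup V] [InnerProductSpace ℝ V]
    [MeasurableSpace V] [BorelSpace V] [FiniteDimensional ℝ V] (f : V → ℂ) (v ξ : V) :
    𝓕 (fun x => f x * Complex.exp (Complex.I * ((2 * Real.pi * ⟪v, x⟫ : ℝ) : ℂ))) ξ
      = 𝓕 f (ξ - v) := by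
  simp only [Real.fourier_eq', smul_eq_mul]
  congr 1 with x
  rw [mul_left_comm, ← Complex.exp_add, mul_comm, inner_sub_right, real_inner_comm v]
  congr 2
  push_cast
  ring

theorem one_add_norm_sq_le_two_mul {E : Type*} [SeminormedAddCommGroup E] (v ξ : E) :
    1 + ‖v‖ ^ 2 ≤ 2 * ((1 + ‖ξ‖ ^ 2) * (1 + ‖ξ - v‖ ^ 2)) := by
  have htri : ‖v‖ ≤ ‖ξ‖ + ‖ξ - v‖ := norm_sub_rev v ξ ▸ norm_le_norm_add_norm_sub' v ξ
  nlinarith [pow_le_pow_left₀ (norm_nonneg v) htri 2, sq_nonneg (‖ξ‖ - ‖ξ - v‖),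
    sq_nonneg (‖ξ‖ * ‖ξ - v‖)]

theorem one_add_norm_sq_rpow_neg_le {E : Type*} [NormedAddCommGroup E] {v : E} (hv : v ≠ 0)
    {t : ℝ} (ht : 0 ≤ t) (ξ : E) :
    (1 + ‖ξ‖ ^ 2) ^ (-t / 2) ≤ (√2 / ‖v‖) ^ t * (1 + ‖ξ - v‖ ^ 2) ^ (t / 2) := by
  set A := 1 + ‖ξ‖ ^ 2
  set B := 1 + ‖ξ - v‖ ^ 2
  have hA : 0 < A := by positivity
  have hv' : 0 < ‖v‖ := norm_pos_iff.2 hv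
  have h : 1 ≤ (√2 / ‖v‖) ^ 2 * A * B := by
    rw [div_pow, Real.sq_sqrt zero_le_two, mul_assoc, div_mul_eq_mul_div,
      one_le_div₀ (by positivity)]
    linarith [one_add_norm_sq_le_two_mul v ξ]
  calc A ^ (-t / 2) = (A ^ (t / 2))⁻¹ := by rw [neg_div, Real.rpow_neg hA.le]
  _ ≤ (A ^ (t / 2))⁻¹ * ((√2 / ‖v‖) ^ 2 * A * B) ^ (t / 2) :=
      le_mul_of_one_le_right (by positivity) (Real.one_le_rpow h (by positivity))
  _ = (√2 / ‖v‖) ^ t * B ^ (t / 2) := by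
      rw [Real.mul_rpow (by positivity) (by positivity), Real.mul_rpow (by positivity) hA.le,
        ← Real.rpow_natCast, ← Real.rpow_mul (by positivity)]
      field_simp
      ring_nf

theorem FLnorm_neg_mul_exp_inner_le {d : ℕ} (f : EuclideanSpace ℝ (Fin d) → ℂ)
    {v : EuclideanSpace ℝ (Fin d)} (hv : v ≠ 0) {t : ℝ} (ht : 0 ≤ t) (p : ℝ≥0∞) :
    FLnorm d (-t) p (fun x => f x * Complex.exp (Complex.I * ((2 * Real.pi * ⟪v, x⟫ : ℝ) : ℂ)))
      ≤ ENNReal.ofReal ((√2 / ‖v‖) ^ t) * FLnorm d t p f := by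
  rw [FLnorm, funext (Real.fourier_mul_exp_inner f v), FLnorm]
  conv_rhs => rw [← eLpNorm_comp_sub_right volume _ v]
  refine eLpNorm_le_mul_eLpNorm_of_ae_le_mul (ae_of_all _ fun ξ => ?_) p
  rw [Real.norm_of_nonneg (by positivity), Real.norm_of_nonneg (by positivity), mul_left_comm]
  exact mul_le_mul_of_nonneg_left (one_add_norm_sq_rpow_neg_le hv ht ξ) (norm_nonneg _)

theorem FLnorm_modulation_decay_general (d : ℕ)
    (j : EuclideanSpace ℝ (Fin d)) (hj : j ≠ 0) (s : ℝ) (hs : s ≤ 0) :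
    ∃ C : ℝ, 0 < C ∧ ∀ p : ℝ≥0∞, 1 ≤ p → ∀ ε : ℝ, ε ∈ Set.Ioc (0 : ℝ) 1 →
      ∀ f : SchwartzMap (EuclideanSpace ℝ (Fin d)) ℂ,
        FLnorm d s p (fun x => f x * Complex.exp (Complex.I * ((⟪j, x⟫ / ε : ℝ) : ℂ))) ≤
          ENNReal.ofReal (C * ε ^ |s|) * FLnorm d |s| p (fun x => f x) := by
  have hj' : 0 < ‖j‖ := norm_pos_iff.2 hj
  refine ⟨(2 * √2 * Real.pi / ‖j‖) ^ |s|, by positivity, fun p _ ε ⟨hε, _⟩ f => ?_⟩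
  set v : EuclideanSpace ℝ (Fin d) := (2 * Real.pi * ε)⁻¹ • j
  have hv : v ≠ 0 := smul_ne_zero (by positivity) hj
  have hmod (x) : (⟪j, x⟫ / ε : ℝ) = 2 * Real.pi * ⟪v, x⟫ := by
    rw [real_inner_smul_left]
    field_simp
  have hnorm : √2 / ‖v‖ = 2 * √2 * Real.pi / ‖j‖ * ε := by
    rw [norm_smul, norm_inv, Real.norm_of_nonneg (by positivity)]
    field_simp
  simp_rw [hmod]
  rw [← Real.mul_rpow (by positivity) hε.le, ← hnorm]
  conv_lhs => rw [← neg_neg s, ← abs_of_nonpos hs]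
  exact FLnorm_neg_mul_exp_inner_le f hv (abs_nonneg s) p

/-- For `j ≠ 0` and `s ≤ 0`, the modulation `f e^{ij·x/ε}` loses a factor
`ε^{|s|}` in Fourier–Lebesgue spaces, uniformly in `p ∈ [1,∞]` and `ε ∈ (0,1]`. -/
theorem FLnorm_modulation_decay (d : ℕ) (hd : 1 ≤ d)
    (j : EuclideanSpace ℝ (Fin d)) (hj : j ≠ 0) (s : ℝ) (hs : s ≤ 0) :
    ∃ C : ℝ, 0 < C ∧ ∀ p : ℝ≥0∞, 1 ≤ p → ∀ ε : ℝ, ε ∈ Set.Ioc (0 : ℝ) 1 →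
      ∀ f : SchwartzMap (EuclideanSpace ℝ (Fin d)) ℂ,
        FLnorm d s p (fun x => f x * Complex.exp (Complex.I * ((⟪j, x⟫ / ε : ℝ) : ℂ))) ≤
          ENNReal.ofReal (C * ε ^ |s|) * FLnorm d |s| p (fun x => f x) :=
  FLnorm_modulation_decay_general d j hj s hs
end
end
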